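/- Let $\hat{\Sigma}$ be an $n \times n$ real symmetric positive definite matrix. Define the Kullback-Leibler divergence between two $n \times n$ symmetric positive definite matrices $\Sigma$ and $\hat{\Sigma}$ as $\mathcal{D}_{KL}(\Sigma \| \hat{\Sigma}) = \tfrac{1}{2}(-\log\det \Sigma + \log\det \hat{\Sigma} + \mathrm{tr}(\Sigma \hat{\Sigma}^{-1}) - n)$. Then the diagonal matrix $\Sigma_D = \mathrm{diag}(\gamma_1^{-1}, \ldots, \gamma_n^{-1})$, where $\gamma_i$ is the $i$-th diagonal entry of $\hat{\Sigma}^{-1}$, minimizes $\mathcal{D}_{KL}(D \| \hat{\Sigma})$ over all positive definite diagonal matrices $D$. -/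

import Mathlib

open Matrix

noncomputable def KL {n : ℕ} (A B : Matrix (Fin n) (Fin n) ℝ) : ℝ :=
  (1 / 2) * (-Real.log A.det + Real.log B.det + (A * B⁻¹).trace - n)

/-! For diagonal `D = diagonal d` the divergence `KL D S` is, up to terms independent of `d`,
`∑ i, (d i * γ i - log (d i))` with `γ i = S⁻¹ i i > 0`. Each summand is minimized at
`d i = (γ i)⁻¹`, as `log t ≤ t - 1` at `t = d i * γ i` shows. -/

theorem Matrix.trace_diagonal_mul {m R : Type*} [Fintype m] [DecidableEq m] [Semiring R]
    (d : m → R) (B : Matrix m m R) : (diagonal d * B).trace = ∑ i, d i * B i i := by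
  simp only [trace, diag_apply, diagonal_mul]

theorem Real.isMinOn_mul_sub_log {γ : ℝ} (hγ : 0 < γ) :
    IsMinOn (fun x => x * γ - Real.log x) (Set.Ioi 0) γ⁻¹ := by
  intro x (hx : 0 < x)
  have hlog := Real.log_le_sub_one_of_pos (mul_pos hx hγ)
  rw [Real.log_mul hx.ne' hγ.ne'] at hlog
  simp only [Set.mem_ofPred_eq, Real.log_inv, inv_mul_cancel₀ hγ.ne']
  linarith

theorem KL_diagonal {n : ℕ} {d : Fin n → ℝ} (hd : ∀ i, 0 < d i) (S : Matrix (Fin n) (Fin n) ℝ) :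
    KL (diagonal d) S = (1 / 2) * (∑ i, (d i * S⁻¹ i i - Real.log (d i)) + Real.log S.det - n) := by
  rw [KL, det_diagonal, Real.log_prod fun i _ => (hd i).ne', trace_diagonal_mul,
    Finset.sum_sub_distrib]
  ring

theorem diag_minimizes_KL {n : ℕ} (S : Matrix (Fin n) (Fin n) ℝ)
    (hS : S.PosDef) :
    ∀ d : Fin n → ℝ, (∀ i, 0 < d i) →
      KL (Matrix.diagonal (fun i => (S⁻¹ i i)⁻¹)) S ≤ KL (Matrix.diagonal d) S := by
  intro d hd
  have hγ : ∀ i, 0 < S⁻¹ i i := fun i => hS.inv.diag_pos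
  rw [KL_diagonal (fun i => inv_pos.2 (hγ i)), KL_diagonal hd]
  gcongr 1 / 2 * (∑ i, ?_ + _ - _)
  exact Real.isMinOn_mul_sub_log (hγ i) (hd i)
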